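/- Let n ≥ 2 and i be positive integers with i < n and gcd(n, i) = 1. Then the ℂ-linear span of all products of at most 2n − 3 elements of {J_n^i, (J_nᵀ)^{n−i}} (including the empty product, the identity matrix) is a proper subspace of M_n(ℂ). -/

import Mathlib

open Matrix

/-- The `n × n` nilpotent Jordan block over `ℂ`. -/
def jordan (n : ℕ) : Matrix (Fin n) (Fin n) ℂ :=
  Matrix.of fun a b => if (a : ℕ) + 1 = (b : ℕ) then 1 else 0

/-- `L_k(S)`: the ℂ-linear span of all words in `S` of length at most `k`
(including the empty word, the identity matrix). -/
noncomputable def wordSpan (n k : ℕ) (S : Set (Matrix (Fin n) (Fin n) ℂ)) :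
    Submodule ℂ (Matrix (Fin n) (Fin n) ℂ) :=
  Submodule.span ℂ {M | ∃ w : List (Matrix (Fin n) (Fin n) ℂ),
    w.length ≤ k ∧ (∀ x ∈ w, x ∈ S) ∧ M = w.prod}

/-!
`J^i` and `(Jᵀ)^(n-i)` are the two halves of the rotation `a ↦ a + i` of `ℤ/n`: the first is
its restriction to the points with `a + i < n`, the second to the points that wrap around.
Hence the `(a, b)` entry of a word in them is `1` if the word spells out the wrap/no-wrap
itinerary of `a` under the rotation and the rotation carries `a` to `b` in that many steps,
and `0` otherwise.

Take `p = i - 1`, `q = -i - 1` and their translates `p + 1 = i`, `q + 1 = -i`. Translation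
commutes with the rotation, so a word of length `ℓ` reaches `q` from `p` iff it reaches `q + 1`
from `p + 1`, iff `n ∣ (ℓ + 2) i`, i.e. (for `ℓ ≤ 2n - 3`, `i` coprime to `n`) iff `ℓ = n - 2`.
In the first `n - 2` steps the orbit of `p` avoids `-1` and `-1 - i`, the only points whose
translate by `1` wraps differently, so `p` and `p + 1` have the same itinerary. Thus the
functional `M ↦ M p q - M (p + 1) (q + 1)` vanishes on all words of length `≤ 2n - 3`, but not
on the matrix unit at `(p, q)`.
-/

open Fin.CommRing

lemma List.exists_map_eq_of_forall_mem_range {α β : Type*} {g : β → α} :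
    ∀ w : List α, (∀ x ∈ w, x ∈ Set.range g) → ∃ l : List β, l.map g = w
  | [], _ => ⟨[], rfl⟩
  | x :: w, h => by
    obtain ⟨s, rfl⟩ := h x List.mem_cons_self
    obtain ⟨l, rfl⟩ :=
      exists_map_eq_of_forall_mem_range w fun y hy => h y (List.mem_cons_of_mem _ hy)
    exact ⟨s :: l, rfl⟩

lemma add_right_iterate_add {M : Type*} [AddCommMonoid M] (a b x : M) (ℓ : ℕ) :
    (· + a)^[ℓ] (x + b) = (· + a)^[ℓ] x + b := by
  simp only [add_right_iterate, add_right_comm x b]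

lemma add_right_iterate_sub_one_eq_neg_sub_one_iff {R : Type*} [CommRing R] (a : R) (ℓ : ℕ) :
    (· + a)^[ℓ] (a - 1) = -a - 1 ↔ (ℓ + 2) • a = 0 := by
  rw [add_right_iterate]
  constructor <;> intro h <;> linear_combination h

section LabelMatrix

variable {ι σ R : Type*} (f : ι → ι) (c : ι → σ)

def itinerary (a : ι) (ℓ : ℕ) : List σ :=
  List.ofFn fun j : Fin ℓ => c (f^[j] a)

lemma itinerary_succ (a : ι) (ℓ : ℕ) :
    itinerary f c a (ℓ + 1) = c a :: itinerary f c (f a) ℓ := by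
  simp [itinerary, List.ofFn_succ, Function.iterate_succ_apply]

variable [Fintype ι] [DecidableEq ι] [DecidableEq σ] [Semiring R]

def labelMatrix (s : σ) : Matrix ι ι R :=
  Matrix.of fun a b => if c a = s ∧ f a = b then 1 else 0

lemma labelMatrix_mul_apply (s : σ) (P : Matrix ι ι R) (a b : ι) :
    (labelMatrix f c s * P : Matrix ι ι R) a b = if c a = s then P (f a) b else 0 := by
  simp [labelMatrix, Matrix.mul_apply, ite_and]

lemma prod_map_labelMatrix_apply (l : List σ) (a b : ι) :
    (l.map (labelMatrix (R := R) f c)).prod a b =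
      if l = itinerary f c a l.length ∧ f^[l.length] a = b then 1 else 0 := by
  induction l generalizing a with
  | nil => simp [itinerary, Matrix.one_apply]
  | cons s l ih =>
    rw [List.map_cons, List.prod_cons, labelMatrix_mul_apply, ih, List.length_cons,
      itinerary_succ, Function.iterate_succ_apply]
    by_cases h : c a = s
    · subst h; simp
    · simp [h, Ne.symm h]

lemma prod_map_labelMatrix_apply_eq_of_itinerary_eq {p q p' q' : ι} (l : List σ)
    (hend : f^[l.length] p = q ↔ f^[l.length] p' = q')
    (hit : f^[l.length] p = q → itinerary f c p l.length = itinerary f c p' l.length) :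
    (l.map (labelMatrix (R := R) f c)).prod p q = (l.map (labelMatrix f c)).prod p' q' := by
  rw [prod_map_labelMatrix_apply, prod_map_labelMatrix_apply]
  exact if_congr ⟨fun ⟨hl, h⟩ => ⟨hl.trans (hit h), hend.1 h⟩,
    fun ⟨hl, h⟩ => ⟨hl.trans (hit (hend.2 h)).symm, hend.2 h⟩⟩ rfl rfl

end LabelMatrix

lemma jordan_pow_apply (n k : ℕ) (a b : Fin n) :
    (jordan n ^ k) a b = if (a : ℕ) + k = b then 1 else 0 := by
  induction k generalizing b with
  | zero => simp [Matrix.one_apply, Fin.ext_iff]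
  | succ k ih =>
    rw [pow_succ, Matrix.mul_apply]
    simp only [ih]
    simp only [jordan, Matrix.of_apply, ite_mul, one_mul, zero_mul]
    rw [Fin.sum_univ_eq_sum_range
      (fun j => if (a : ℕ) + k = j then if j + 1 = (b : ℕ) then (1 : ℂ) else 0 else 0),
      Finset.sum_ite_eq, ← ite_and]
    exact if_congr (by have := b.isLt; simp only [Finset.mem_range]; omega) rfl rfl

section Rotation

variable {n : ℕ} [NeZero n] {i : ℕ}

def wraps (i : ℕ) (a : Fin n) : Bool := n ≤ (a : ℕ) + i

lemma val_add_natCast_of_lt (hin : i < n) (a : Fin n) :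
    ((a + i : Fin n) : ℕ) = if n ≤ (a : ℕ) + i then (a : ℕ) + i - n else (a : ℕ) + i := by
  rw [Fin.val_add_eq_ite, Fin.val_natCast, Nat.mod_eq_of_lt hin]

lemma jordan_pow_eq_labelMatrix (hin : i < n) :
    jordan n ^ i = labelMatrix (· + (i : Fin n)) (wraps i) false := by
  ext a b
  rw [jordan_pow_apply, labelMatrix, Matrix.of_apply]
  simp only [Fin.ext_iff, val_add_natCast_of_lt hin]
  refine if_congr ?_ rfl rfl
  simp only [wraps, decide_eq_false_iff_not]
  split_ifs <;> omega

lemma jordan_transpose_pow_eq_labelMatrix (hin : i < n) :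
    (jordan n)ᵀ ^ (n - i) = labelMatrix (· + (i : Fin n)) (wraps i) true := by
  ext a b
  rw [← Matrix.transpose_pow, Matrix.transpose_apply, jordan_pow_apply, labelMatrix,
    Matrix.of_apply]
  simp only [Fin.ext_iff, val_add_natCast_of_lt hin]
  refine if_congr ?_ rfl rfl
  simp only [wraps, decide_eq_true_eq]
  split_ifs <;> omega

lemma wraps_add_one {x : Fin n} (h₁ : x + 1 ≠ 0) (h₂ : x + 1 + i ≠ 0) :
    wraps i (x + 1) = wraps i x := by
  have hcast : ∀ m : ℕ, (x : ℕ) + m = n → x + (m : Fin n) = 0 := fun m hm => by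
    rw [← Fin.cast_val_eq_self x, ← Nat.cast_add, hm, Fin.natCast_self]
  have hx : (x : ℕ) + 1 < n :=
    lt_of_le_of_ne x.isLt fun h => h₁ (by simpa using hcast 1 h)
  have hxi : (x : ℕ) + 1 + i ≠ n := fun h =>
    h₂ (by simpa [add_assoc] using hcast (1 + i) (by omega))
  simp only [wraps, Fin.val_add_one_of_lt' hx, decide_eq_decide]
  omega

lemma nsmul_natCast_eq_zero_iff {k : ℕ} (hco : n.Coprime i) :
    k • (i : Fin n) = 0 ↔ n ∣ k := by
  rw [nsmul_eq_mul, ← Nat.cast_mul, Fin.natCast_eq_zero, hco.dvd_mul_right]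

lemma itinerary_sub_one_eq_itinerary (hco : n.Coprime i) {ℓ : ℕ} (hℓ : ℓ + 2 ≤ n) :
    itinerary (· + (i : Fin n)) (wraps i) ((i : Fin n) - 1) ℓ =
      itinerary (· + (i : Fin n)) (wraps i) (i : Fin n) ℓ := by
  refine List.ofFn_inj.2 (funext fun j => ?_)
  set x := (· + (i : Fin n))^[j] ((i : Fin n) - 1)
  have hx : (· + (i : Fin n))^[j] (i : Fin n) = x + 1 := by
    rw [← add_right_iterate_add, sub_add_cancel]
  have hx₁ : x + 1 = ((j : ℕ) + 1) • (i : Fin n) := by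
    simp only [x, add_right_iterate, succ_nsmul]; abel
  have hx₂ : x + 1 + i = ((j : ℕ) + 2) • (i : Fin n) := by rw [hx₁, ← succ_nsmul]
  have hne : ∀ k, 0 < k → k < n → k • (i : Fin n) ≠ 0 := fun k hk hkn => by
    rw [ne_eq, nsmul_natCast_eq_zero_iff hco]
    exact Nat.not_dvd_of_pos_of_lt hk hkn
  rw [hx, wraps_add_one (hx₁ ▸ hne _ (by omega) (by omega)) (hx₂ ▸ hne _ (by omega) (by omega))]

lemma prod_map_labelMatrix_rotation_apply_eq {R : Type*} [Semiring R] (hco : n.Coprime i)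
    (l : List Bool) (hl : l.length + 3 ≤ 2 * n) :
    (l.map (labelMatrix (R := R) (· + (i : Fin n)) (wraps i))).prod ((i : Fin n) - 1)
        (-(i : Fin n) - 1) =
      (l.map (labelMatrix (· + (i : Fin n)) (wraps i))).prod (i : Fin n) (-(i : Fin n)) := by
  refine prod_map_labelMatrix_apply_eq_of_itinerary_eq _ _ l ?_ fun h => ?_
  · simp only [add_right_iterate]
    constructor <;> intro h <;> linear_combination h
  · rw [add_right_iterate_sub_one_eq_neg_sub_one_iff, nsmul_natCast_eq_zero_iff hco] at h
    exact itinerary_sub_one_eq_itinerary hco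
      (Nat.eq_of_dvd_of_lt_two_mul (by omega) h (by omega)).le

end Rotation

theorem stmt_17_general (n i : ℕ) (hn : 2 ≤ n) (hin : i < n)
    (hgcd : Nat.gcd n i = 1) :
    wordSpan n (2 * n - 3) {jordan n ^ i, (jordan n)ᵀ ^ (n - i)} ≠ ⊤ := by
  have : NeZero n := ⟨by omega⟩
  have : Nontrivial (Fin n) := Fin.nontrivial_iff_two_le.2 hn
  let φ := entryLinearMap ℂ ℂ ((i : Fin n) - 1) (-(i : Fin n) - 1) -
    entryLinearMap ℂ ℂ (i : Fin n) (-(i : Fin n))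
  have hker : wordSpan n (2 * n - 3) {jordan n ^ i, (jordan n)ᵀ ^ (n - i)} ≤ LinearMap.ker φ := by
    refine Submodule.span_le.2 ?_
    rintro _ ⟨w, hlen, hw, rfl⟩
    obtain ⟨l, rfl⟩ := List.exists_map_eq_of_forall_mem_range w fun x hx => by
      rcases hw x hx with rfl | rfl
      exacts [⟨false, (jordan_pow_eq_labelMatrix hin).symm⟩,
        ⟨true, (jordan_transpose_pow_eq_labelMatrix hin).symm⟩]
    rw [List.length_map] at hlen
    simpa [φ, sub_eq_zero] using prod_map_labelMatrix_rotation_apply_eq hgcd l (by omega)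
  intro htop
  have h := hker (htop ▸ Submodule.mem_top :
    single ((i : Fin n) - 1) (-(i : Fin n) - 1) (1 : ℂ) ∈ _)
  have hne : (i : Fin n) - 1 ≠ i := by simp
  simp [φ, hne] at h

/-- For `n ≥ 2`, `0 < i < n` with `gcd(n, i) = 1`, the span of words of length at most
`2n - 3` in `{J_n^i, (J_nᵀ)^{n-i}}` is a proper subspace of `M_n(ℂ)`. -/
theorem stmt_17 (n i : ℕ) (hn : 2 ≤ n) (hi : 0 < i) (hin : i < n)
    (hgcd : Nat.gcd n i = 1) :
    wordSpan n (2 * n - 3) {jordan n ^ i, (jordan n)ᵀ ^ (n - i)} ≠ ⊤ :=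
  stmt_17_general n i hn hin hgcd
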